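/- Let M be an integral homology 3-sphere and 𝒦 a very admissible set of knots in M. Then the idèle group decomposes as I_{(M;𝒦)} = U + P_{(M;𝒦)}, where U is the group of unit idèles and P_{(M;𝒦)} the principal idèle group. -/

import Mathlib

open scoped Pointwise

/-- The idèle group I_{(M;𝒦)} (as a set): restricted product of H₁(∂V_K) = ℤ[m] × ℤ[l]
with almost all longitude components v_K(a_K) = 0. -/
def Idele (K : Type) : Set (K → ℤ × ℤ) := {a | {k | (a k).2 ≠ 0}.Finite}

/-- The unit idèles U = ∏ ℤ[m] (all longitude components zero). -/
def UnitIdele (K : Type) : Set (K → ℤ × ℤ) := {a | ∀ k, (a k).2 = 0}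

/-- ι^α_{K*} : H₁(∂V_k) → H₁(X_L) in the linking-number model over an integral
homology 3-sphere: H₁(X_L) is free on the meridians of the knots in the finite set L,
the meridian of k maps to its own meridian class (0 if k ∉ L), and a longitude of k
maps to ∑_{j ∈ L} lk(k,j)·[m_j]. -/
def iotaL (K : Type) [DecidableEq K] (lk : K → K → ℤ) (L : Finset K) (k : K) :
    ℤ × ℤ → ({x // x ∈ L} → ℤ) :=
  fun a j => (if (j : K) = k then a.1 else 0) + a.2 * lk k (j : K)

/-- The principal idèles P_{(M;𝒦)}: idèles whose image ∑_K ι^α_{K*}(a_K) vanishes in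
H₁(X_{L_α}) for every finite subset L_α ⊂ 𝒦. -/
def PIdele (K : Type) [DecidableEq K] (lk : K → K → ℤ) : Set (K → ℤ × ℤ) :=
  {a | a ∈ Idele K ∧ ∀ L : Finset K, (∑ᶠ k : K, iotaL K lk L k (a k)) = 0}

/-!
Only the longitude components of an idèle obstruct principality, and they are finitely
supported. So for an idèle `a` with longitude support `S`, the idèle with the same
longitudes and meridian components `-∑_{i ∈ S} v_i(a_i) lk(i, k)` is principal: in each
`H₁(M ∖ L)` its meridian part cancels its longitude part. It differs from `a` by a unit idèle.
-/

namespace Idele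

variable {K : Type} [DecidableEq K] (lk : K → K → ℤ)

lemma support_iotaL_subset (L S : Finset K) {a : K → ℤ × ℤ} (ha : ∀ k ∉ S, (a k).2 = 0) :
    (Function.support fun k => iotaL K lk L k (a k)) ⊆ ↑(L ∪ S) := by
  intro k hk
  by_contra hkLS
  simp only [Finset.coe_union, Set.mem_union, Finset.mem_coe, not_or] at hkLS
  refine hk (funext fun j => ?_)
  have hjk : (j : K) ≠ k := fun h => hkLS.1 (h ▸ j.2)
  simp [iotaL, hjk, ha k hkLS.2]

lemma finsum_iotaL_apply (L S : Finset K) {a : K → ℤ × ℤ} (ha : ∀ k ∉ S, (a k).2 = 0)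
    (j : {x // x ∈ L}) :
    (∑ᶠ k, iotaL K lk L k (a k)) j = (a j).1 + ∑ k ∈ S, (a k).2 * lk k j := by
  rw [finsum_eq_finsetSum_of_support_subset _ (support_iotaL_subset lk L S ha),
    Finset.sum_apply]
  simp only [iotaL, Finset.sum_add_distrib, Finset.sum_ite_eq,
    Finset.mem_union, j.2, true_or, if_true]
  congr 1
  refine (Finset.sum_subset Finset.subset_union_right fun k _ hk => ?_).symm
  simp [ha k hk]

lemma exists_mem_pIdele_snd_eq {a : K → ℤ × ℤ} (ha : a ∈ Idele K) :
    ∃ p ∈ PIdele K lk, ∀ k, (p k).2 = (a k).2 := by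
  set S := ha.toFinset
  have hS : ∀ k ∉ S, (a k).2 = 0 := fun k hk => not_not.1 fun h => hk (ha.mem_toFinset.2 h)
  let p : K → ℤ × ℤ := fun k => (-∑ i ∈ S, (a i).2 * lk i k, (a k).2)
  refine ⟨p, ⟨ha, fun L => funext fun j => ?_⟩, fun _ => rfl⟩
  rw [finsum_iotaL_apply lk L S (a := p) hS]
  simp [p]

lemma unitIdele_add_pIdele_subset : UnitIdele K + PIdele K lk ⊆ Idele K := by
  rintro _ ⟨u, hu, p, hp, rfl⟩
  refine hp.1.subset fun k hk => ?_
  simpa [hu k] using hk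

lemma subset_unitIdele_add_pIdele : Idele K ⊆ UnitIdele K + PIdele K lk := by
  intro a ha
  obtain ⟨p, hp, hpa⟩ := exists_mem_pIdele_snd_eq lk ha
  exact ⟨a - p, fun k => by simp [hpa k], p, hp, sub_add_cancel a p⟩

end Idele

theorem stmt_8_general (K : Type) [DecidableEq K] (lk : K → K → ℤ) :
    Idele K = UnitIdele K + PIdele K lk :=
  (Idele.subset_unitIdele_add_pIdele lk).antisymm (Idele.unitIdele_add_pIdele_subset lk)

/-- for an integral homology 3-sphere M (modeled by its linking pairing
lk on a very admissible countable set 𝒦 of knots, symmetric, with 0-framed longitudes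
and each knot linking only finitely many others), the idèle group decomposes as
I_{(M;𝒦)} = U + P_{(M;𝒦)}. -/
theorem stmt_8 (K : Type) [DecidableEq K] [Countable K] (lk : K → K → ℤ)
    (hsymm : ∀ i j, lk i j = lk j i) (hself : ∀ i, lk i i = 0)
    (hfin : ∀ i, {j | lk i j ≠ 0}.Finite) :
    Idele K = UnitIdele K + PIdele K lk :=
  stmt_8_general K lk
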